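/- arXiv:1409.6748 — 2 statements merged into one kernel-verified Lean document; each statement's English description precedes it below -/
import Mathlib

section
/- Let Γ = (V, E) be a finite graph and let F ⊆ E be a flat of the graphic matroid of Γ. If S is an nbc set associated to F (i.e., S ⊆ F is nbc and S spans the subgraph Γ[F]), then the set of larger endpoints {h(e) : e ∈ S} equals {h(e) : e ∈ F'} for any other spanning nbc set S' associated to F; in particular {h(e) : e ∈ S} does not depend on the choice of S. (Here Γ is chordal with a perfect elimination ordering.) -/
open SimpleGraph

section Defs

variable {V : Type*}

/-- The larger endpoint (head) of an edge, with respect to a linear order on vertices. -/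
def esup [LinearOrder V] (e : Sym2 V) : V :=
  Sym2.lift ⟨fun a b => a ⊔ b, fun a b => sup_comm a b⟩ e

/-- The smaller endpoint (tail) of an edge. -/
def einf [LinearOrder V] (e : Sym2 V) : V :=
  Sym2.lift ⟨fun a b => a ⊓ b, fun a b => inf_comm a b⟩ e

/-- The order on edges induced by a linear order on vertices:
`e < e'` iff `h(e) < h(e')`, or `h(e) = h(e')` and `t(e) < t(e')`. -/
def edgeLT [LinearOrder V] (e f : Sym2 V) : Prop :=
  esup e < esup f ∨ (esup e = esup f ∧ einf e < einf f)

/-- The linear order on the vertices is a perfect elimination ordering: every vertex is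
simplicial in the induced subgraph on the vertices below it. -/
def IsPEO [LinearOrder V] (G : SimpleGraph V) : Prop :=
  ∀ v u w : V, u < v → w < v → u ≠ w → G.Adj u v → G.Adj w v → G.Adj u w

/-- A cycle (walk) in a graph has a chord. -/
def SimpleGraph.Walk.HasChord {G : SimpleGraph V} {v : V} (c : G.Walk v v) : Prop :=
  ∃ a b : V, a ∈ c.support ∧ b ∈ c.support ∧ G.Adj a b ∧ s(a, b) ∉ c.edges

/-- A graph is chordal if every cycle with more than three vertices has a chord. -/
def SimpleGraph.IsChordal (G : SimpleGraph V) : Prop :=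
  ∀ (v : V) (c : G.Walk v v), c.IsCycle → 3 < c.length → c.HasChord

/-- `S` is the edge set of a cycle of `G`. -/
def IsCycleEdges [DecidableEq V] (G : SimpleGraph V) (S : Finset (Sym2 V)) : Prop :=
  ∃ (v : V) (c : G.Walk v v), c.IsCycle ∧ c.edges.toFinset = S

/-- `S` is a broken circuit: there is an edge `e` smaller than every element of `S` such that
`S ∪ {e}` is the edge set of a cycle. -/
def IsBrokenCircuit [LinearOrder V] (G : SimpleGraph V) (S : Finset (Sym2 V)) : Prop :=
  ∃ e : Sym2 V, e ∉ S ∧ (∀ f ∈ S, edgeLT e f) ∧ IsCycleEdges G (insert e S)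

/-- `S` is an nbc set: a set of edges of `G` no subset of which is a broken circuit. -/
def IsNBC [LinearOrder V] (G : SimpleGraph V) (S : Finset (Sym2 V)) : Prop :=
  ↑S ⊆ G.edgeSet ∧ ∀ T ⊆ S, ¬IsBrokenCircuit G T

end Defs

/-- `F` is a flat of the graphic matroid of `G`: a set of edges of `G` such that any edge of `G`
whose endpoints are joined by a path using edges of `F` already lies in `F`. -/
def IsGraphicFlat {V : Type*} (G : SimpleGraph V) (F : Set (Sym2 V)) : Prop :=
  F ⊆ G.edgeSet ∧
    ∀ u w : V, G.Adj u w → (SimpleGraph.fromEdgeSet F).Reachable u w → s(u, w) ∈ F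

/-- `S` spans the subgraph `Γ[F]`: the endpoints of every edge of `F` are connected using
only edges of `S`. -/
def SpansFlat {V : Type*} (F S : Set (Sym2 V)) : Prop :=
  ∀ u w : V, s(u, w) ∈ F → (SimpleGraph.fromEdgeSet S).Reachable u w

/-!
With a perfect elimination ordering, two edges `s(u, v)`, `s(w, v)` of an nbc set with the same
larger endpoint `v` would span, together with the chord `s(u, w)` supplied by the ordering, a
triangle whose smallest edge is `s(u, w)`: a broken circuit. So the edges of an nbc set have
distinct larger endpoints. In a forest with this property every path from `v` to a smaller vertex
leaves `v` downwards (otherwise its second vertex would be the larger endpoint of two of its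
edges), so `v` is a larger endpoint of `S` iff `v` is joined in `Γ[F]` to a smaller vertex. This
condition does not mention `S`.
-/

section

variable {V : Type*}

lemma SpansFlat.reachable {F S : Set (Sym2 V)} (h : SpansFlat F S) {u v : V}
    (huv : (fromEdgeSet F).Reachable u v) : (fromEdgeSet S).Reachable u v := by
  rw [reachable_iff_reflTransGen] at huv ⊢
  refine Relation.reflTransGen_closed (fun a b hab => ?_) _ _ huv
  exact (reachable_iff_reflTransGen a b).1 (h a b ((fromEdgeSet_adj _).1 hab).1)

lemma isCycleEdges_triangle [DecidableEq V] {G : SimpleGraph V} {u v w : V}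
    (huv : G.Adj u v) (hvw : G.Adj v w) (hwu : G.Adj w u) :
    IsCycleEdges G {s(u, v), s(v, w), s(w, u)} := by
  refine ⟨u, .cons huv (.cons hvw (.cons hwu .nil)), ?_, by simp⟩
  rw [Walk.cons_isCycle_iff]
  simp [huv.ne, hvw.ne, hwu.ne, huv.ne.symm, hwu.ne.symm]

variable [LinearOrder V]

lemma esup_mk_of_le {u v : V} (h : u ≤ v) : esup s(u, v) = v := sup_eq_right.2 h

lemma exists_lt_eq_mk_of_mem_edgeSet {G : SimpleGraph V} {e : Sym2 V} (he : e ∈ G.edgeSet) :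
    ∃ u v, u < v ∧ e = s(u, v) := by
  induction e using Sym2.ind with
  | _ a b =>
    rcases lt_trichotomy a b with h | rfl | h
    · exact ⟨a, b, h, rfl⟩
    · exact absurd he (G.not_isDiag_of_mem_edgeSet · rfl)
    · exact ⟨b, a, h, Sym2.eq_swap⟩

lemma IsNBC.injOn_esup {G : SimpleGraph V} (hpeo : IsPEO G) {S : Finset (Sym2 V)}
    (hS : IsNBC G S) : Set.InjOn esup (S : Set (Sym2 V)) := by
  intro e he f hf hef
  by_contra hne
  obtain ⟨u, v, huv, rfl⟩ := exists_lt_eq_mk_of_mem_edgeSet (hS.1 he)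
  obtain ⟨w, v', hwv, rfl⟩ := exists_lt_eq_mk_of_mem_edgeSet (hS.1 hf)
  rw [esup_mk_of_le huv.le, esup_mk_of_le hwv.le] at hef
  subst hef
  have huw : u ≠ w := by rintro rfl; exact hne rfl
  have hadj_uv : G.Adj u v := hS.1 he
  have hadj_wv : G.Adj w v := hS.1 hf
  have hadj_uw : G.Adj u w := hpeo v u w huv hwv huw hadj_uv hadj_wv
  have hchord_lt : ∀ x ∈ ({s(u, v), s(w, v)} : Finset (Sym2 V)), esup s(u, w) < esup x := by
    simp only [Finset.mem_insert, Finset.mem_singleton, forall_eq_or_imp, forall_eq,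
      esup_mk_of_le huv.le, esup_mk_of_le hwv.le]
    exact ⟨max_lt huv hwv, max_lt huv hwv⟩
  refine hS.2 _ (Finset.insert_subset_iff.2 ⟨he, Finset.singleton_subset_iff.2 hf⟩)
    ⟨s(u, w), fun hmem => (hchord_lt _ hmem).ne rfl, fun x hx => .inl (hchord_lt x hx), ?_⟩
  convert isCycleEdges_triangle hadj_uw hadj_wv hadj_uv.symm using 1
  rw [Sym2.eq_swap (a := v), Finset.pair_comm]

lemma SimpleGraph.Walk.IsPath.snd_lt {H : SimpleGraph V} (hH : Set.InjOn esup H.edgeSet) {v u : V}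
    {p : H.Walk v u} (hp : p.IsPath) (huv : u < v) : p.snd < v := by
  induction p with
  | nil => exact absurd huv (lt_irrefl _)
  | @cons v x u hvx q ih =>
    rw [Walk.snd_cons]
    by_contra! hvx_le
    have hvx_lt : v < x := lt_of_le_of_ne hvx_le hvx.ne
    rw [Walk.cons_isPath_iff] at hp
    have hq : ¬q.Nil := fun h => (huv.trans hvx_lt).ne h.eq.symm
    have hsnd := ih hp.1 (huv.trans hvx_lt)
    have hedge : s(v, x) = s(x, q.snd) :=
      hH hvx (q.adj_snd hq) <| by
        rw [esup_mk_of_le hvx_lt.le, Sym2.eq_swap, esup_mk_of_le hsnd.le]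
    have hv : v = q.snd := by
      rcases Sym2.eq_iff.1 hedge with ⟨h, -⟩ | ⟨h, -⟩
      · exact absurd h hvx.ne
      · exact h
    exact hp.2 (hv ▸ q.getVert_mem_support 1)

lemma mem_image_esup_of_reachable {S : Finset (Sym2 V)}
    (hS : Set.InjOn esup (S : Set (Sym2 V))) {u v : V} (huv : u < v)
    (h : (fromEdgeSet (S : Set (Sym2 V))).Reachable u v) :
    v ∈ S.image esup := by
  obtain ⟨p, hp⟩ := h.symm.exists_isPath
  have hH : Set.InjOn esup (fromEdgeSet (S : Set (Sym2 V))).edgeSet :=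
    hS.mono (by rw [edgeSet_fromEdgeSet]; exact Set.sdiff_subset)
  have hsnd := hp.snd_lt hH huv
  have hnil : ¬p.Nil := Walk.not_nil_of_ne huv.ne'
  exact Finset.mem_image.2 ⟨_, ((fromEdgeSet_adj _).1 (p.adj_snd hnil)).1, by
    rw [Sym2.eq_swap, esup_mk_of_le hsnd.le]⟩

theorem IsNBC.mem_image_esup_iff {G : SimpleGraph V} (hpeo : IsPEO G) {F : Set (Sym2 V)}
    {S : Finset (Sym2 V)} (hS : IsNBC G S) (hSF : ↑S ⊆ F) (hspan : SpansFlat F ↑S) {v : V} :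
    v ∈ S.image esup ↔ ∃ u < v, (fromEdgeSet F).Reachable u v := by
  constructor
  · intro hv
    obtain ⟨e, he, rfl⟩ := Finset.mem_image.1 hv
    obtain ⟨u, w, huw, rfl⟩ := exists_lt_eq_mk_of_mem_edgeSet (hS.1 he)
    rw [esup_mk_of_le huw.le]
    exact ⟨u, huw, ((fromEdgeSet_adj _).2 ⟨hSF he, huw.ne⟩).reachable⟩
  · rintro ⟨u, huv, h⟩
    exact mem_image_esup_of_reachable (hS.injOn_esup hpeo) huv (hspan.reachable h)

end

theorem stmt_3_general {V : Type*} [LinearOrder V] (G : SimpleGraph V)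
    (hpeo : IsPEO G) (F : Finset (Sym2 V))
    (S S' : Finset (Sym2 V))
    (hSF : S ⊆ F) (hS : IsNBC G S) (hSspan : SpansFlat (↑F) (↑S : Set (Sym2 V)))
    (hS'F : S' ⊆ F) (hS' : IsNBC G S') (hS'span : SpansFlat (↑F) (↑S' : Set (Sym2 V))) :
    S.image esup = S'.image esup := by
  ext v
  rw [hS.mem_image_esup_iff hpeo (Finset.coe_subset.2 hSF) hSspan,
    hS'.mem_image_esup_iff hpeo (Finset.coe_subset.2 hS'F) hS'span]

/-- For a chordal graph with a perfect elimination ordering and a flat `F` of the graphic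
matroid, the set of larger endpoints of a spanning nbc set associated to `F` does not depend
on the choice of that set. -/
theorem stmt_3 {V : Type*} [Fintype V] [LinearOrder V] (G : SimpleGraph V)
    (hchordal : G.IsChordal) (hpeo : IsPEO G) (F : Finset (Sym2 V))
    (hF : IsGraphicFlat G ↑F) (S S' : Finset (Sym2 V))
    (hSF : S ⊆ F) (hS : IsNBC G S) (hSspan : SpansFlat (↑F) (↑S : Set (Sym2 V)))
    (hS'F : S' ⊆ F) (hS' : IsNBC G S') (hS'span : SpansFlat (↑F) (↑S' : Set (Sym2 V))) :
    S.image esup = S'.image esup :=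
  stmt_3_general G hpeo F S S' hSF hS hSspan hS'F hS' hS'span
end

section
/- Let Γ = (V, E) be a chordal graph with perfect elimination ordering and let v be the maximal vertex. Then every nbc set S of Γ decomposes uniquely as S = S' ∪ S'' where S' is an nbc set of Γ − v and S'' is either empty or a single edge with h(e) = v. Consequently, if N(Γ) denotes the number of nbc sets of Γ and deg(v) the degree of v, then N(Γ) = N(Γ − v) · (1 + deg(v)). -/
open SimpleGraph

/-- The collection of all nbc sets of `G`. -/
noncomputable def nbcFinset {V : Type*} [Fintype V] [LinearOrder V] (G : SimpleGraph V) :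
    Finset (Finset (Sym2 V)) :=
  @Finset.filter _ (IsNBC G) (Classical.decPred _) Finset.univ

/-! For a perfect elimination ordering, a set of edges is nbc iff its edges have pairwise distinct
larger endpoints. Two edges `s(a, w)`, `s(b, w)` with common top `w` have `a ~ b` because `w` is
simplicial below itself, and the chord `s(a, b)` is smaller than both, so they form a broken
circuit. Conversely, the top vertex `m` of a cycle lies on two cycle edges, both with larger
endpoint `m`, and neither can be the minimal edge of a broken circuit since some cycle edge avoids
`m`. As `v` is maximal, the edges with larger endpoint `v` are exactly the `deg v` edges at `v`;
so an nbc set is an nbc set of `Γ − v` plus at most one edge at `v`, and every such union is nbc.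
-/

section Endpoints

variable {V : Type*} [LinearOrder V]

lemma esup_mk (a b : V) : esup s(a, b) = a ⊔ b := rfl

lemma esup_mem (e : Sym2 V) : esup e ∈ e := by
  induction e using Sym2.inductionOn with
  | hf a b => rcases le_total a b with h | h <;> simp [esup_mk, h]

lemma mk_einf_esup (e : Sym2 V) : s(einf e, esup e) = e := by
  induction e using Sym2.inductionOn with
  | hf a b => rcases le_total a b with h | h <;> simp [einf, esup_mk, h, Sym2.eq_swap]

lemma einf_lt_esup {e : Sym2 V} (h : ¬e.IsDiag) : einf e < esup e := by
  induction e using Sym2.inductionOn with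
  | hf a b => exact inf_lt_sup.mpr (by simpa using h)

lemma esup_eq_of_mem_of_le {e : Sym2 V} {m : V} (hm : m ∈ e) (hle : ∀ x ∈ e, x ≤ m) :
    esup e = m :=
  le_antisymm (hle _ (esup_mem e)) <| by
    induction e using Sym2.inductionOn with
    | hf a b => rcases Sym2.mem_iff.mp hm with rfl | rfl <;> simp [esup_mk]

lemma edgeLT.esup_le {e f : Sym2 V} (h : edgeLT e f) : esup e ≤ esup f :=
  h.elim le_of_lt fun h ↦ h.1.le

end Endpoints

namespace SimpleGraph.Walk

variable {V : Type*} {G : SimpleGraph V}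

lemma IsCycle.exists_edges_at_start {m : V} {c : G.Walk m m} (hc : c.IsCycle) :
    ∃ e₁ ∈ c.edges, ∃ e₂ ∈ c.edges, ∃ g ∈ c.edges, e₁ ≠ e₂ ∧ m ∈ e₁ ∧ m ∈ e₂ ∧ m ∉ g := by
  have hlen := hc.three_le_length
  have hnil : ¬c.Nil := hc.not_nil
  have hne : ∀ i, 0 < i → i < c.length → c.getVert i ≠ m := fun i h0 hi h ↦ by
    rcases (hc.getVert_endpoint_iff hi.le).mp h with h | h <;> omega
  refine ⟨_, c.mk_start_snd_mem_edges hnil, _, c.mk_penultimate_end_mem_edges hnil,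
    s(c.getVert 1, c.getVert 2),
    (c.mk_mem_edges_iff_exists).mpr ⟨1, by omega, rfl⟩, ?_, by simp, by simp, ?_⟩
  · rw [Ne, Sym2.eq_iff]
    rintro (⟨-, h⟩ | ⟨-, h⟩)
    · exact (c.adj_snd hnil).ne h.symm
    · exact hc.snd_ne_penultimate h
  · rw [Sym2.mem_iff, not_or]
    exact ⟨(hne 1 (by omega) (by omega)).symm, (hne 2 (by omega) (by omega)).symm⟩

end SimpleGraph.Walk

section Characterization

variable {V : Type*} [LinearOrder V] {G : SimpleGraph V}

lemma isCycleEdges_triangle_s13 {a b c : V} (hab : G.Adj a b) (hbc : G.Adj b c) (hca : G.Adj c a) :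
    IsCycleEdges G {s(a, b), s(b, c), s(c, a)} := by
  refine ⟨a, .cons hab (.cons hbc (.cons hca .nil)), ?_, by simp⟩
  simp [Walk.cons_isCycle_iff, hab.ne, hbc.ne, hca.ne, hca.ne.symm, hab.ne.symm]

lemma injOn_esup_of_isNBC (hpeo : IsPEO G) {S : Finset (Sym2 V)} (hS : IsNBC G S) :
    Set.InjOn esup (S : Set (Sym2 V)) := by
  intro e he f hf hef
  by_contra hne
  set w := esup f
  set a := einf e
  set b := einf f
  have hae : s(w, a) = e := by rw [Sym2.eq_swap, ← hef]; exact mk_einf_esup e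
  have hbf : s(b, w) = f := mk_einf_esup f
  have haw : a < w := hef ▸ einf_lt_esup (G.not_isDiag_of_mem_edgeSet (hS.1 he))
  have hbw : b < w := einf_lt_esup (G.not_isDiag_of_mem_edgeSet (hS.1 hf))
  have hab : a ≠ b := fun h ↦ hne (by rw [← hae, ← hbf, h, Sym2.eq_swap])
  have hadj_wa : G.Adj w a := by rw [← mem_edgeSet, hae]; exact hS.1 he
  have hadj_bw : G.Adj b w := by rw [← mem_edgeSet, hbf]; exact hS.1 hf
  have hlt : ∀ g ∈ ({f, e} : Finset (Sym2 V)), edgeLT s(a, b) g := by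
    intro g hg
    left
    rw [esup_mk, sup_lt_iff]
    rcases Finset.mem_insert.mp hg with rfl | hg
    · exact ⟨haw, hbw⟩
    · rw [Finset.mem_singleton.mp hg, hef]; exact ⟨haw, hbw⟩
  refine hS.2 {f, e} (Finset.insert_subset_iff.mpr ⟨hf, Finset.singleton_subset_iff.mpr he⟩)
    ⟨s(a, b), fun h ↦ by simpa [edgeLT] using hlt _ h, hlt, ?_⟩
  rw [← hae, ← hbf]
  exact isCycleEdges_triangle_s13 (hpeo w a b haw hbw hab hadj_wa.symm hadj_bw) hadj_bw hadj_wa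

lemma isNBC_of_injOn_esup {S : Finset (Sym2 V)} (hS : ↑S ⊆ G.edgeSet)
    (hinj : Set.InjOn esup (S : Set (Sym2 V))) : IsNBC G S := by
  refine ⟨hS, ?_⟩
  rintro T hTS ⟨e, -, hlt, x, c, hc, hedges⟩
  obtain ⟨m, hm, hle⟩ := c.support.toFinset.exists_max_image id ⟨x, by simp⟩
  replace hm : m ∈ c.support := List.mem_toFinset.mp hm
  set d := c.rotate m hm
  have hd_edges : ∀ f ∈ d.edges, f ∈ c.edges := fun f ↦ (c.rotate_edges m hm).perm.mem_iff.mp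
  have hmem : ∀ f ∈ d.edges, f ∈ insert e T := fun f hf ↦ by
    rw [← hedges, List.mem_toFinset]; exact hd_edges f hf
  have hle : ∀ f ∈ d.edges, ∀ y ∈ f, y ≤ m := fun f hf y hy ↦
    hle y (List.mem_toFinset.mpr (c.mem_support_of_mem_edges (hd_edges f hf) hy))
  obtain ⟨e₁, he₁, e₂, he₂, g, hg, hne, hm₁, hm₂, hmg⟩ := (hc.rotate hm).exists_edges_at_start
  have hg_lt : esup g < m :=
    (hle g hg _ (esup_mem g)).lt_of_ne fun h ↦ hmg (h ▸ esup_mem g)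
  have hmem_T : ∀ f ∈ d.edges, m ∈ f → f ∈ T := by
    intro f hf hmf
    rcases Finset.mem_insert.mp (hmem f hf) with rfl | hfT
    · have hgT : g ∈ T :=
        (Finset.mem_insert.mp (hmem g hg)).resolve_left (by rintro rfl; exact hmg hmf)
      exact absurd ((hlt g hgT).esup_le.trans_lt hg_lt)
        (esup_eq_of_mem_of_le hmf (hle _ hf)).not_lt
    · exact hfT
  exact hne <| hinj (hTS (hmem_T e₁ he₁ hm₁)) (hTS (hmem_T e₂ he₂ hm₂)) <|
    (esup_eq_of_mem_of_le hm₁ (hle _ he₁)).trans (esup_eq_of_mem_of_le hm₂ (hle _ he₂)).symm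

lemma isNBC_iff_injOn_esup (hpeo : IsPEO G) {S : Finset (Sym2 V)} :
    IsNBC G S ↔ ↑S ⊆ G.edgeSet ∧ Set.InjOn esup (S : Set (Sym2 V)) :=
  ⟨fun h ↦ ⟨h.1, injOn_esup_of_isNBC hpeo h⟩, fun h ↦ isNBC_of_injOn_esup h.1 h.2⟩

lemma IsNBC.subset {S T : Finset (Sym2 V)} (hS : IsNBC G S) (hTS : T ⊆ S) : IsNBC G T :=
  ⟨(Finset.coe_subset.mpr hTS).trans hS.1, fun U hUT ↦ hS.2 U (hUT.trans hTS)⟩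

@[simp]
lemma mem_nbcFinset [Fintype V] {S : Finset (Sym2 V)} : S ∈ nbcFinset G ↔ IsNBC G S := by
  simp [nbcFinset]

end Characterization

section MaximalVertex

variable {V : Type*} [LinearOrder V] {G : SimpleGraph V} {v : V}

lemma IsPEO.deleteEdges_incidenceSet (hpeo : IsPEO G) (v : V) :
    IsPEO (G.deleteEdges (G.incidenceSet v)) := by
  intro w a b haw hbw hab ha hb
  simp only [deleteEdges_adj, mk'_mem_incidenceSet_iff, not_and, not_or] at ha hb ⊢
  exact ⟨hpeo w a b haw hbw hab ha.1 hb.1, fun _ ↦ ⟨(ha.2 ha.1).1, (hb.2 hb.1).1⟩⟩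

lemma esup_eq_iff_mem (hmax : ∀ u, u ≤ v) {e : Sym2 V} : esup e = v ↔ v ∈ e :=
  ⟨fun h ↦ h ▸ esup_mem e, fun h ↦ esup_eq_of_mem_of_le h fun x _ ↦ hmax x⟩

lemma mem_edgeSet_deleteEdges_incidenceSet (hmax : ∀ u, u ≤ v) {e : Sym2 V} :
    e ∈ (G.deleteEdges (G.incidenceSet v)).edgeSet ↔ e ∈ G.edgeSet ∧ esup e ≠ v := by
  simp [incidenceSet, esup_eq_iff_mem hmax]

lemma isNBC_deleteEdges_incidenceSet_iff (hpeo : IsPEO G) (hmax : ∀ u, u ≤ v)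
    {S : Finset (Sym2 V)} :
    IsNBC (G.deleteEdges (G.incidenceSet v)) S ↔ IsNBC G S ∧ ∀ e ∈ S, esup e ≠ v := by
  simp only [isNBC_iff_injOn_esup hpeo, isNBC_iff_injOn_esup (hpeo.deleteEdges_incidenceSet v),
    Set.subset_def, Finset.mem_coe, mem_edgeSet_deleteEdges_incidenceSet hmax]
  grind

end MaximalVertex

section HeadSplit

variable {V : Type*} [LinearOrder V] {G : SimpleGraph V} {v : V}

def headSplit (v : V) (S : Finset (Sym2 V)) : Finset (Sym2 V) × Finset (Sym2 V) :=
  (S.filter (esup · ≠ v), S.filter (esup · = v))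

lemma headSplit_fst_union_snd (S : Finset (Sym2 V)) :
    (headSplit v S).1 ∪ (headSplit v S).2 = S := by
  rw [Finset.union_comm]
  exact Finset.filter_union_filter_not_eq _ S

lemma headSplit_union {A B : Finset (Sym2 V)} (hA : ∀ e ∈ A, esup e ≠ v)
    (hB : ∀ e ∈ B, esup e = v) : headSplit v (A ∪ B) = (A, B) := by
  simp only [headSplit, Finset.filter_union, Finset.filter_true_of_mem hA,
    Finset.filter_false_of_mem hA, Finset.filter_true_of_mem hB,
    Finset.filter_false_of_mem fun e he ↦ not_not.mpr (hB e he), Finset.union_empty,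
    Finset.empty_union]

lemma isNBC_headSplit_fst (hpeo : IsPEO G) (hmax : ∀ u, u ≤ v) {S : Finset (Sym2 V)}
    (hS : IsNBC G S) : IsNBC (G.deleteEdges (G.incidenceSet v)) (headSplit v S).1 :=
  (isNBC_deleteEdges_incidenceSet_iff hpeo hmax).mpr
    ⟨hS.subset (Finset.filter_subset _ _), fun _ he ↦ (Finset.mem_filter.mp he).2⟩

lemma headSplit_snd_eq_empty_or_singleton (hpeo : IsPEO G) {S : Finset (Sym2 V)}
    (hS : IsNBC G S) :
    (headSplit v S).2 = ∅ ∨ ∃ e, (headSplit v S).2 = {e} ∧ esup e = v := by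
  rcases (headSplit v S).2.eq_empty_or_nonempty with h | ⟨e, he⟩
  · exact .inl h
  obtain ⟨heS, hev⟩ := Finset.mem_filter.mp he
  refine .inr ⟨e, Finset.eq_singleton_iff_unique_mem.mpr ⟨he, fun f hf ↦ ?_⟩, hev⟩
  obtain ⟨hfS, hfv⟩ := Finset.mem_filter.mp hf
  exact injOn_esup_of_isNBC hpeo hS hfS heS (hfv.trans hev.symm)

lemma isNBC_insert_of_mem_incidenceSet (hpeo : IsPEO G) (hmax : ∀ u, u ≤ v)
    {A : Finset (Sym2 V)} (hA : IsNBC (G.deleteEdges (G.incidenceSet v)) A)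
    {e : Sym2 V} (he : e ∈ G.incidenceSet v) : IsNBC G (insert e A) := by
  obtain ⟨hAG, hAv⟩ := (isNBC_deleteEdges_incidenceSet_iff hpeo hmax).mp hA
  obtain ⟨hAE, hAinj⟩ := (isNBC_iff_injOn_esup hpeo).mp hAG
  have hev : esup e = v := (esup_eq_iff_mem hmax).mpr he.2
  have heA : e ∉ A := fun h ↦ hAv e h hev
  rw [isNBC_iff_injOn_esup hpeo, Finset.coe_insert, Set.insert_subset_iff,
    Set.injOn_insert (by simpa using heA)]
  exact ⟨⟨he.1, hAE⟩, hAinj, fun ⟨f, hf, hfe⟩ ↦ hAv f hf (hfe.trans hev)⟩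

lemma card_nbcFinset_eq_card_product [Fintype V] [DecidableRel G.Adj] (hpeo : IsPEO G)
    (hmax : ∀ u, u ≤ v) :
    (nbcFinset G).card = (nbcFinset (G.deleteEdges (G.incidenceSet v)) ×ˢ
      insert ∅ ((G.incidenceFinset v).powersetCard 1)).card := by
  refine Finset.card_nbij' (headSplit v) (fun p ↦ p.1 ∪ p.2) ?_ ?_
    (fun S _ ↦ headSplit_fst_union_snd S) ?_
  · intro S hS
    have hS : IsNBC G S := mem_nbcFinset.mp hS
    simp only [Finset.coe_product, Set.mem_prod, Finset.mem_coe, mem_nbcFinset,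
      Finset.mem_insert, Finset.powersetCard_one, Finset.mem_map, mem_incidenceFinset]
    refine ⟨isNBC_headSplit_fst hpeo hmax hS, ?_⟩
    rcases headSplit_snd_eq_empty_or_singleton hpeo hS with h | ⟨e, h, hev⟩
    · exact .inl h
    have heS : e ∈ S := (Finset.mem_filter.mp (h ▸ Finset.mem_singleton_self e)).1
    exact .inr ⟨e, ⟨hS.1 heS, (esup_eq_iff_mem hmax).mp hev⟩, h.symm⟩
  · rintro ⟨A, B⟩ hp
    simp only [Finset.coe_product, Set.mem_prod, Finset.mem_coe, mem_nbcFinset,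
      Finset.mem_insert, Finset.powersetCard_one, Finset.mem_map, mem_incidenceFinset] at hp ⊢
    obtain ⟨hA, rfl | ⟨e, he, rfl⟩⟩ := hp
    · exact ((isNBC_deleteEdges_incidenceSet_iff hpeo hmax).mp (by simpa using hA)).1
    · simpa [Finset.union_singleton] using isNBC_insert_of_mem_incidenceSet hpeo hmax hA he
  · rintro ⟨A, B⟩ hp
    simp only [Finset.coe_product, Set.mem_prod, Finset.mem_coe, mem_nbcFinset,
      Finset.mem_insert, Finset.powersetCard_one, Finset.mem_map, mem_incidenceFinset] at hp
    obtain ⟨hA, hB⟩ := hp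
    refine headSplit_union ((isNBC_deleteEdges_incidenceSet_iff hpeo hmax).mp hA).2 ?_
    rcases hB with rfl | ⟨e, he, rfl⟩
    · simp
    · simpa using (esup_eq_iff_mem hmax).mpr he.2

end HeadSplit

theorem stmt_13_general {V : Type*} [Fintype V] [LinearOrder V] (G : SimpleGraph V)
    [DecidableRel G.Adj] (hpeo : IsPEO G)
    (v : V) (hmax : ∀ u : V, u ≤ v) :
    (∀ S : Finset (Sym2 V), IsNBC G S →
        ∃! p : Finset (Sym2 V) × Finset (Sym2 V),
          S = p.1 ∪ p.2 ∧ IsNBC (G.deleteEdges (G.incidenceSet v)) p.1 ∧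
            (p.2 = ∅ ∨ ∃ e : Sym2 V, p.2 = {e} ∧ esup e = v)) ∧
      (nbcFinset G).card = (nbcFinset (G.deleteEdges (G.incidenceSet v))).card *
        (1 + G.degree v) := by
  refine ⟨fun S hS ↦ ⟨headSplit v S, ⟨(headSplit_fst_union_snd S).symm,
    isNBC_headSplit_fst hpeo hmax hS, headSplit_snd_eq_empty_or_singleton hpeo hS⟩, ?_⟩, ?_⟩
  · rintro ⟨A, B⟩ ⟨rfl, hA, hB⟩
    refine (headSplit_union ((isNBC_deleteEdges_incidenceSet_iff hpeo hmax).mp hA).2 ?_).symm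
    rcases hB with rfl | ⟨e, rfl, hev⟩
    · simp
    · simpa using hev
  · rw [card_nbcFinset_eq_card_product hpeo hmax, Finset.card_product,
      Finset.card_insert_of_notMem (by simp), Finset.card_powersetCard, Nat.choose_one_right,
      card_incidenceFinset_eq_degree, add_comm]

/-- For a chordal graph with perfect elimination ordering and maximal vertex `v`: every nbc
set decomposes uniquely as the union of an nbc set of `Γ − v` and at most one edge with
larger endpoint `v`; consequently `N(Γ) = N(Γ − v) · (1 + deg v)`. -/
theorem stmt_13 {V : Type*} [Fintype V] [LinearOrder V] (G : SimpleGraph V)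
    [DecidableRel G.Adj] (hchordal : G.IsChordal) (hpeo : IsPEO G)
    (v : V) (hmax : ∀ u : V, u ≤ v) :
    (∀ S : Finset (Sym2 V), IsNBC G S →
        ∃! p : Finset (Sym2 V) × Finset (Sym2 V),
          S = p.1 ∪ p.2 ∧ IsNBC (G.deleteEdges (G.incidenceSet v)) p.1 ∧
            (p.2 = ∅ ∨ ∃ e : Sym2 V, p.2 = {e} ∧ esup e = v)) ∧
      (nbcFinset G).card = (nbcFinset (G.deleteEdges (G.incidenceSet v))).card *
        (1 + G.degree v) :=
  stmt_13_general G hpeo v hmax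
end
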